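/- arXiv:math/0509183 — 3 statements merged into one kernel-verified Lean document; each statement's English description precedes it below -/
import Mathlib

section
/- Let J be a Jordan algebra over a field F of characteristic zero with a triangle (p₁, p₂, q), i.e., p₁² = p₁, p₂² = p₂, p₁p₂ = 0, p₁q = (1/2)q, p₂q = (1/2)q, and q² = p₁ + p₂ = 1. Then the connection involution σ defined by σ(x) = 2(qx)q - x is an algebra automorphism of J of order 2. -/
/-- The connection involution `σ(x) = 2(qx)q - x`. -/
def connInv {J : Type*} [NonUnitalNonAssocCommRing J] (q x : J) : J :=
  (q * x) * q + (q * x) * q - x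

/-- Elementwise form of the linearised Jordan identity (doubled). -/
theorem jlin2 {J : Type*} [NonUnitalNonAssocCommRing J] [IsCommJordan J] (a b c x : J) :
    a * ((b*c) * x) + b * ((c*a)*x) + c * ((a*b)*x)
      + (a * ((b*c) * x) + b * ((c*a)*x) + c * ((a*b)*x))
    = (b*c) * (a*x) + (c*a)*(b*x) + (a*b)*(c*x)
      + ((b*c) * (a*x) + (c*a)*(b*x) + (a*b)*(c*x)) := by
  have h := two_nsmul_lie_lmul_lmul_add_add_eq_zero a b c
  have h2 := DFunLike.congr_fun h x
  have hadd : ∀ (F G : AddMonoid.End J) (y : J), (F + G) y = F y + G y := fun _ _ _ => rfl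
  have hsub : ∀ (F G : AddMonoid.End J) (y : J), (F - G) y = F y - G y := fun _ _ _ => rfl
  have hm : ∀ (F G : AddMonoid.End J) (y : J), (F * G) y = F (G y) := fun _ _ _ => rfl
  have hL : ∀ (a y : J), (AddMonoid.End.mulLeft a) y = a * y := fun _ _ => rfl
  have hz : (0 : AddMonoid.End J) x = 0 := rfl
  simp only [Ring.lie_def, two_smul, hadd, hsub, hm, hL, hz] at h2
  rw [← sub_eq_zero, ← h2]
  abel

/-- For a triangle `(p₁, p₂, q)` in a unital Jordan algebra over a field of
characteristic zero, the connection involution `σ(x) = 2(qx)q - x` is an algebra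
automorphism of order 2. -/
theorem connInv_is_automorphism_order_two (F : Type*) [Field F] [CharZero F]
    (J : Type*) [NonUnitalNonAssocCommRing J] [Module F J]
    [IsScalarTower F J J] [SMulCommClass F J J] [IsCommJordan J]
    (e p1 p2 q : J) (he : ∀ x, e * x = x)
    (hp1 : p1 * p1 = p1) (hp2 : p2 * p2 = p2) (hp12 : p1 * p2 = 0)
    (hq1 : p1 * q = (1/2 : F) • q) (hq2 : p2 * q = (1/2 : F) • q)
    (hqq : q * q = p1 + p2) (hsum : p1 + p2 = e) :
    (∀ x y, connInv q (x * y) = connInv q x * connInv q y) ∧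
    (∀ x, connInv q (connInv q x) = x) := by
  -- halving
  have half : ∀ u v : J, u + u = v + v → u = v := by
    intro u v h
    have h2 : (2:F) • u = (2:F) • v := by rw [two_smul, two_smul]; exact h
    have h3 := congrArg (fun z => (2:F)⁻¹ • z) h2
    simpa [inv_smul_smul₀ (two_ne_zero : (2:F) ≠ 0)] using h3
  -- the linearised Jordan identity
  have jlin : ∀ a b c x : J,
      a * ((b*c) * x) + b * ((c*a)*x) + c * ((a*b)*x)
        = (b*c) * (a*x) + (c*a)*(b*x) + (a*b)*(c*x) :=
    fun a b c x => half _ _ (jlin2 a b c x)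
  have he' : q * q = e := hqq.trans hsum
  -- L_q commutes with L_{qc}
  have hB : ∀ c z : J, q*((q*c)*z) = (q*c)*(q*z) := by
    intro c z
    have h := jlin q q c z
    rw [mul_comm c q, he', he z, he (c*z)] at h
    exact half _ _ (add_right_cancel h)
  -- L_q ∘ L_q ∘ L_q = L_q
  have hF : ∀ w : J, q*(q*(q*w)) = q*w := by
    intro w
    have h := hB w q
    rw [he', mul_comm (q*w) e, he (q*w), mul_comm (q*w) q] at h
    exact h
  -- (L_q² x)(L_q² y) = (qx)(qy)
  have h6 : ∀ x y : J, (q*(q*x))*(q*(q*y)) = (q*x)*(q*y) := by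
    intro x y
    calc (q*(q*x))*(q*(q*y)) = q*((q*(q*x))*(q*y)) := (hB (q*x) (q*y)).symm
      _ = q*((q*y)*(q*(q*x))) := by rw [mul_comm (q*(q*x)) (q*y)]
      _ = q*(q*((q*y)*(q*x))) := by rw [← hB y (q*x)]
      _ = q*(q*(q*((q*y)*x))) := by rw [← hB y x]
      _ = q*((q*y)*x) := hF _
      _ = (q*y)*(q*x) := hB y x
      _ = (q*x)*(q*y) := mul_comm _ _
  constructor
  · intro x y
    have h := jlin q x y q
    rw [he', mul_comm (x*y) e, he (x*y), mul_comm y q, mul_comm x q,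
      mul_comm (q*y) (q*x), mul_comm (x*y) q, mul_comm (q*y) q, mul_comm (q*x) q] at h
    have heq : q*(q*(x*y)) =
        x*y + (q*x)*(q*y) + (q*x)*(q*y) - x*(q*(q*y)) - y*(q*(q*x)) := by
      rw [← h]; abel
    show (q*(x*y))*q + (q*(x*y))*q - x*y
        = ((q*x)*q + (q*x)*q - x) * ((q*y)*q + (q*y)*q - y)
    rw [mul_comm (q*(x*y)) q, heq, mul_comm (q*x) q, mul_comm (q*y) q]
    simp only [mul_add, add_mul, mul_sub, sub_mul]
    rw [h6 x y, mul_comm (q*(q*x)) y]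
    abel
  · intro x
    have hA : q * connInv q x = q * x := by
      show q * ((q*x)*q + (q*x)*q - x) = q * x
      rw [mul_sub, mul_add, mul_comm (q*x) q, hF x]
      abel
    show (q * connInv q x) * q + (q * connInv q x) * q - connInv q x = x
    rw [hA]
    show (q*x)*q + (q*x)*q - ((q*x)*q + (q*x)*q - x) = x
    abel
end

section
/- Let J be a Jordan algebra over a field of characteristic zero with a triangle (p₁, p₂, q). Then the map x₁₁ ↦ x₁₁q is a linear isomorphism from the Peirce space J₁₁ onto J₁₂^{(+)}, the +1-eigenspace of the connection involution σ restricted to J₁₂. -/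
section Aux

variable (F : Type*) [Field F] [CharZero F]
  {J : Type*} [NonUnitalNonAssocCommRing J] [Module F J]
  [IsScalarTower F J J] [SMulCommClass F J J] [IsCommJordan J]

include F

/-- Full linearization of the Jordan identity, elementwise. -/
theorem jordanLin (a b c y : J) :
    a * ((b*c)*y) + b * ((c*a)*y) + c * ((a*b)*y)
      = (b*c)*(a*y) + (c*a)*(b*y) + (a*b)*(c*y) := by
  have hop := two_nsmul_lie_lmul_lmul_add_add_eq_zero a b c
  have h : 2 • (a * ((b*c)*y) - (b*c)*(a*y) + (b*((c*a)*y) - (c*a)*(b*y))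
      + (c*((a*b)*y) - (a*b)*(c*y))) = 0 := DFunLike.congr_fun hop y
  linear_combination (norm := module) ((1/2 : F)) • h

/-- `J11 ∘ q ⊆ J12`. -/
theorem aux_J11_mul_q (p q x : J) (hp : p * p = p) (hpq : p * q = (1/2 : F) • q)
    (hx : p * x = x) : p * (x * q) = (1/2 : F) • (x * q) := by
  have h := jordanLin F p p x q
  simp only [mul_comm x p, hx, hp, hpq, mul_smul_comm] at h
  linear_combination (norm := module) h

/-- `L_q ^ 3 = L_q` when `q * q = e`. -/
theorem aux_qqq (e q x : J) (he : ∀ z, e * z = z) (hqq : q * q = e) :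
    q * (q * (q * x)) = q * x := by
  have h := jordanLin F q q x q
  simp only [hqq, he, mul_comm _ e, he, mul_comm x q, mul_comm (q*x) q] at h
  linear_combination (norm := module) ((1/2 : F)) • h

/-- For `z ∈ J11(p)`: `p (q (q z)) = z / 2`. -/
theorem aux_half (e p q z : J) (he : ∀ w, e * w = w) (hqq : q * q = e)
    (hpq : p * q = (1/2 : F) • q) (hz : p * z = z) :
    p * (q * (q * z)) = (1/2 : F) • z := by
  have h := jordanLin F p q z q
  simp only [mul_comm z p, hz, hpq, hqq, mul_comm z q, mul_comm (q*z) q,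
    smul_mul_assoc, mul_smul_comm, mul_comm _ e, he] at h
  linear_combination (norm := module) h

/-- For `a ∈ J12(p)`: `p (q a) ∈ J11(p)`. -/
theorem aux_pqa (p q a : J) (hp : p * p = p) (hpq : p * q = (1/2 : F) • q)
    (ha : p * a = (1/2 : F) • a) :
    p * (p * (q * a)) = p * (q * a) := by
  have h := jordanLin F p q a p
  simp only [mul_comm a p, ha, hp, mul_comm q p, hpq, mul_comm (q*a) p,
    mul_comm a q, smul_mul_assoc, mul_smul_comm] at h
  linear_combination (norm := module) h

end Aux

/-- For a triangle `(p₁, p₂, q)` in a unital Jordan algebra over a field of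
characteristic zero, the map `x₁₁ ↦ x₁₁ q` is a linear isomorphism from the
Peirce space `J₁₁ = {x : p₁x = x}` onto `J₁₂⁽⁺⁾`, the `+1`-eigenspace of the
connection involution on `J₁₂ = {x : p₁x = (1/2)x}`. -/
theorem mul_q_bijection_J11_J12plus (F : Type*) [Field F] [CharZero F]
    (J : Type*) [NonUnitalNonAssocCommRing J] [Module F J]
    [IsScalarTower F J J] [SMulCommClass F J J] [IsCommJordan J]
    (e p1 p2 q : J) (he : ∀ x, e * x = x)
    (hp1 : p1 * p1 = p1) (hp2 : p2 * p2 = p2) (hp12 : p1 * p2 = 0)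
    (hq1 : p1 * q = (1/2 : F) • q) (hq2 : p2 * q = (1/2 : F) • q)
    (hqq : q * q = p1 + p2) (hsum : p1 + p2 = e) :
    (∀ x, p1 * x = x →
        p1 * (x * q) = (1/2 : F) • (x * q) ∧ connInv q (x * q) = x * q) ∧
    (∀ x y, p1 * x = x → p1 * y = y → x * q = y * q → x = y) ∧
    (∀ a, p1 * a = (1/2 : F) • a → connInv q a = a →
        ∃ x, p1 * x = x ∧ x * q = a) := by
  have hqe : q * q = e := by rw [hqq, hsum]
  refine ⟨fun x hx => ⟨aux_J11_mul_q F p1 q x hp1 hq1 hx, ?_⟩, ?_, ?_⟩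
  · -- connInv q (x*q) = x*q
    have hs := aux_qqq F e q x he hqe
    show (q*(x*q))*q + (q*(x*q))*q - (x*q) = x*q
    rw [mul_comm (q*(x*q)) q, mul_comm x q]
    linear_combination (norm := module) (2 : F) • hs
  · -- injectivity
    intro x y hx hy hxy
    have hz : p1 * (x - y) = x - y := by rw [mul_sub, hx, hy]
    have hq0 : q * (x - y) = 0 := by
      rw [mul_sub, mul_comm q x, mul_comm q y, hxy, sub_self]
    have h := aux_half F e p1 q (x - y) he hqe hq1 hz
    rw [hq0, mul_zero, mul_zero] at h
    have h2 : x - y = 0 := by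
      linear_combination (norm := module) (-2 : F) • h
    exact sub_eq_zero.mp h2
  · -- surjectivity
    intro a ha hσ
    have hσ' : (q*a)*q + (q*a)*q - a = a := hσ
    rw [mul_comm (q*a) q] at hσ'
    have hu : q * (q * a) = a := by
      linear_combination (norm := module) ((1/2 : F)) • hσ'
    refine ⟨(2 : F) • (p1 * (q * a)), ?_, ?_⟩
    · rw [mul_smul_comm, aux_pqa F p1 q a hp1 hq1 ha]
    · -- ((2 • p1(qa)) * q = a
      set x : J := (2 : F) • (p1 * (q * a)) with hxdef
      have hx : p1 * x = x := by
        rw [hxdef, mul_smul_comm, aux_pqa F p1 q a hp1 hq1 ha]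
      have h5 : p1 * (q * (q * x)) = (1/2 : F) • x :=
        aux_half F e p1 q x he hqe hq1 hx
      -- d := x*q - a
      have hdq : q * (q * (x * q - a)) = x * q - a := by
        rw [mul_sub, mul_sub, hu, mul_comm x q, aux_qqq F e q x he hqe,
          mul_comm q x]
      have hdp : p1 * (q * (x * q - a)) = 0 := by
        rw [mul_sub, mul_sub, mul_comm x q, h5, hxdef]
        rw [smul_smul]
        norm_num
      have hw2 : p2 * (q * (x * q - a)) = q * (x * q - a) := by
        have hsplit : p1 * (q * (x * q - a)) + p2 * (q * (x * q - a))
            = q * (x * q - a) := by rw [← add_mul, hsum, he]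
        rw [hdp, zero_add] at hsplit
        exact hsplit
      have hww : q * (q * (q * (x * q - a))) = q * (x * q - a) := by
        rw [hdq]
      have h6 := aux_half F e p2 q (q * (x * q - a)) he hqe hq2 hw2
      rw [hww, hw2] at h6
      -- h6 : q*(x*q-a) = (1/2) • (q*(x*q-a))
      have h9 : q * (x * q - a) = 0 := by
        linear_combination (norm := module) (2 : F) • h6
      have hd0 : x * q - a = 0 := by
        rw [← hdq, h9, mul_zero]
      exact sub_eq_zero.mp hd0
end

section
/- Let J be a Jordan algebra over a field of characteristic zero with triangle (p₁, p₂, q), and let a = x₁₁q and a' ∈ J₁₂^{(+)}. Then (aa')q = (1/2)((aq)a' + a(qa')). -/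
/-- Cancel a factor of `2`, using the module structure over a characteristic-zero field. -/
lemma half_cancel' {F : Type*} [Field F] [CharZero F] {J : Type*} [AddCommGroup J]
    [Module F J] {u v : J} (h : u + u = v + v) : u = v := by
  have h2 : (2 : F) • u = (2 : F) • v := by
    rw [two_smul, two_smul]; exact h
  have h3 := congrArg (fun z : J => (2 : F)⁻¹ • z) h2
  simpa [smul_smul] using h3

/-- The fully linearised Jordan identity, in element form. -/
lemma lin_jordan' (F : Type*) [Field F] [CharZero F] {J : Type*}
    [NonUnitalNonAssocCommRing J] [Module F J] [IsCommJordan J]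
    (a b c w : J) :
    a * ((b * c) * w) + b * ((c * a) * w) + c * ((a * b) * w)
      = (b * c) * (a * w) + (c * a) * (b * w) + (a * b) * (c * w) := by
  have key := two_nsmul_lie_lmul_lmul_add_add_eq_zero a b c
  rw [two_nsmul] at key
  have h' : (a * ((b * c) * w) - (b * c) * (a * w)
        + (b * ((c * a) * w) - (c * a) * (b * w))
        + (c * ((a * b) * w) - (a * b) * (c * w)))
      + (a * ((b * c) * w) - (b * c) * (a * w)
        + (b * ((c * a) * w) - (c * a) * (b * w))
        + (c * ((a * b) * w) - (a * b) * (c * w))) = 0 + 0 := by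
    rw [add_zero]
    exact DFunLike.congr_fun key w
  have h0 := half_cancel' (F := F) h'
  rw [← sub_eq_zero]
  have hX : a * ((b * c) * w) + b * ((c * a) * w) + c * ((a * b) * w)
      - ((b * c) * (a * w) + (c * a) * (b * w) + (a * b) * (c * w))
      = a * ((b * c) * w) - (b * c) * (a * w)
        + (b * ((c * a) * w) - (c * a) * (b * w))
        + (c * ((a * b) * w) - (a * b) * (c * w)) := by abel
  rw [hX]
  exact h0

/-- For a triangle `(p₁, p₂, q)` in a unital Jordan algebra over a field of
characteristic zero, with `a = x₁₁q` (`x₁₁ ∈ J₁₁`) and `a' ∈ J₁₂⁽⁺⁾`, one has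
`(aa')q = (1/2)((aq)a' + a(qa'))`. -/
theorem triangle_aaq_identity (F : Type*) [Field F] [CharZero F]
    (J : Type*) [NonUnitalNonAssocCommRing J] [Module F J]
    [IsScalarTower F J J] [SMulCommClass F J J] [IsCommJordan J]
    (e p1 p2 q : J) (he : ∀ x, e * x = x)
    (hp1 : p1 * p1 = p1) (hp2 : p2 * p2 = p2) (hp12 : p1 * p2 = 0)
    (hq1 : p1 * q = (1/2 : F) • q) (hq2 : p2 * q = (1/2 : F) • q)
    (hqq : q * q = p1 + p2) (hsum : p1 + p2 = e)
    (x11 a' : J) (hx : p1 * x11 = x11)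
    (ha' : p1 * a' = (1/2 : F) • a') (ha'fix : connInv q a' = a') :
    ((x11 * q) * a') * q
      = (1/2 : F) • (((x11 * q) * q) * a' + (x11 * q) * (q * a')) := by
  -- `q * q = e`
  have hqe : q * q = e := hqq.trans hsum
  -- σ-fixedness: `(q * a') * q = a'`
  have hfix : (q * a') * q = a' := by
    have h2 : (q * a') * q + (q * a') * q = a' + a' := by
      have := ha'fix
      unfold connInv at this
      rw [sub_eq_iff_eq_add] at this
      exact this
    exact half_cancel' (F := F) h2
  -- Instance I1 : LIN(q, q, x11, a') gives  q((x11 q)a') = (x11 q)(q a')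
  have I1 : q * ((x11 * q) * a') = (x11 * q) * (q * a') := by
    have h := lin_jordan' F q q x11 a'
    rw [hqe, mul_comm q x11] at h; simp only [he] at h
    -- h : q*((x11*q)*a') + q*((x11*q)*a') + x11*a' = (x11*q)*(q*a') + (x11*q)*(q*a') + x11*a'
    have h' : q * ((x11 * q) * a') + q * ((x11 * q) * a')
        = (x11 * q) * (q * a') + (x11 * q) * (q * a') := by
      have := h
      exact add_right_cancel this
    exact half_cancel' (F := F) h'
  -- Instance I2 : LIN(q, q, a'q, x11 q) gives  q(a'(x11 q)) = a'(q(x11 q))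
  have I2 : q * (a' * (x11 * q)) = a' * (q * (x11 * q)) := by
    have h := lin_jordan' F q q (a' * q) (x11 * q)
    -- reduce `q * (a' * q)` and `(a' * q) * q` to `a'` using σ-fixedness
    have e1 : q * (a' * q) = a' := by rw [mul_comm a' q, mul_comm q (q * a')]; exact hfix
    have e2 : (a' * q) * q = a' := by rw [mul_comm a' q]; exact hfix
    rw [e1, e2, hqe] at h; simp only [he] at h
    -- h : q*(a'*(x11*q)) + q*(a'*(x11*q)) + (a'*q)*(x11*q)
    --   = a'*(q*(x11*q)) + a'*(q*(x11*q)) + (a'*q)*(x11*q)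
    have h' : q * (a' * (x11 * q)) + q * (a' * (x11 * q))
        = a' * (q * (x11 * q)) + a' * (q * (x11 * q)) := add_right_cancel h
    exact half_cancel' (F := F) h'
  -- Combine: both sides of the goal reduce to `(x11 q)(q a')`.
  have T1 : ((x11 * q) * a') * q = (x11 * q) * (q * a') := by
    rw [mul_comm ((x11 * q) * a') q]; exact I1
  have T2 : ((x11 * q) * q) * a' = (x11 * q) * (q * a') := by
    calc ((x11 * q) * q) * a' = a' * ((x11 * q) * q) := by rw [mul_comm]
      _ = a' * (q * (x11 * q)) := by rw [mul_comm (x11 * q) q]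
      _ = q * (a' * (x11 * q)) := I2.symm
      _ = q * ((x11 * q) * a') := by rw [mul_comm a' (x11 * q)]
      _ = (x11 * q) * (q * a') := I1
  rw [T1, T2]
  rw [show (x11 * q) * (q * a') + (x11 * q) * (q * a')
      = (2 : F) • ((x11 * q) * (q * a')) from (two_smul F _).symm]
  rw [smul_smul]
  norm_num
end
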